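/- arXiv:1701.03632 — 7 statements merged into one kernel-verified Lean document; each statement's English description precedes it below -/
import Mathlib

section
/- For every fixed integer k ≥ 2, lim_{n→∞} [Γ(n/2)^k · Γ_k(n/2)^{-1}] / (n/(2π))^{k(k-1)/4} = 1, where Γ_k is the multivariate gamma function. -/
open Filter

noncomputable def multivariateGamma (k : ℕ) (a : ℝ) : ℝ :=
  Real.pi ^ ((k * (k - 1) : ℝ) / 4) *
    ∏ j ∈ Finset.range k, Real.Gamma (a + (1 - ((j : ℝ) + 1)) / 2)

/-!
Log-convexity of `Γ` (Wendel's inequality) squeezes `Γ (x + s) / (Γ x * x ^ s)` between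
`(x / (x + s)) ^ (1 - s)` and `1` for `0 < s < 1`, so `Γ (x + s) ~ Γ x * x ^ s` as `x → ∞`;
the functional equation `Γ (x + 1) = x Γ x` transports this to every real `s`. As
`Γ_k(a) = π ^ (k(k-1)/4) ∏_{j<k} Γ (a - j/2)` and `∑_{j<k} j/2 = k(k-1)/4`, this gives
`Γ_k(a) ~ Γ a ^ k / (a / π) ^ (k(k-1)/4)`; take `a = n / 2`.
-/

open Topology Real Asymptotics

lemma tendsto_add_div_self_atTop (c : ℝ) : Tendsto (fun x : ℝ => (x + c) / x) atTop (𝓝 1) := by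
  have h : Tendsto (fun x : ℝ => 1 + c / x) atTop (𝓝 (1 + 0)) :=
    tendsto_const_nhds.add (tendsto_const_nhds.div_atTop tendsto_id)
  rw [add_zero] at h
  refine h.congr' ?_
  filter_upwards [eventually_ne_atTop 0] with x hx
  field_simp

namespace Real

lemma Gamma_rpow_one_sub_mul_Gamma_add_one_rpow {x : ℝ} (hx : 0 < x) (s : ℝ) :
    Gamma x ^ (1 - s) * Gamma (x + 1) ^ s = Gamma x * x ^ s := by
  have hΓ := Gamma_pos_of_pos hx
  rw [Gamma_add_one hx.ne', mul_rpow hx.le hΓ.le, mul_left_comm, ← rpow_add hΓ, sub_add_cancel,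
    rpow_one, mul_comm]

/-- Wendel's inequality. -/
lemma Gamma_add_le_Gamma_mul_rpow {x s : ℝ} (hx : 0 < x) (hs₀ : 0 < s) (hs₁ : s < 1) :
    Gamma (x + s) ≤ Gamma x * x ^ s := by
  have h := Gamma_mul_add_mul_le_rpow_Gamma_mul_rpow_Gamma (t := x + 1) hx (by linarith)
    (sub_pos.2 hs₁) hs₀ (sub_add_cancel 1 s)
  rwa [show (1 - s) * x + s * (x + 1) = x + s by ring,
    Gamma_rpow_one_sub_mul_Gamma_add_one_rpow hx] at h

lemma tendsto_Gamma_add_div_Gamma_mul_rpow_of_pos_of_lt_one {s : ℝ} (hs₀ : 0 < s) (hs₁ : s < 1) :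
    Tendsto (fun x => Gamma (x + s) / (Gamma x * x ^ s)) atTop (𝓝 1) := by
  have hlower : Tendsto (fun x : ℝ => (x / (x + s)) ^ (1 - s)) atTop (𝓝 1) := by
    have h := ((tendsto_add_div_self_atTop s).inv₀ one_ne_zero).rpow_const (p := 1 - s)
      (.inl (by norm_num))
    simpa only [inv_div, inv_one, one_rpow] using h
  refine tendsto_of_tendsto_of_tendsto_of_le_of_le' hlower tendsto_const_nhds ?_ ?_
  all_goals filter_upwards [eventually_gt_atTop 0] with x hx
  · have hxs : 0 < x + s := by linarith
    -- the upper bound at `x + s` with exponent `1 - s` bounds `Γ (x + 1) = x Γ x` from above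
    have h := Gamma_add_le_Gamma_mul_rpow hxs (sub_pos.2 hs₁) (by linarith)
    rw [add_add_sub_cancel, Gamma_add_one hx.ne'] at h
    rw [le_div_iff₀ (by positivity), div_rpow hx.le hxs.le]
    calc x ^ (1 - s) / (x + s) ^ (1 - s) * (Gamma x * x ^ s)
        = x * Gamma x / (x + s) ^ (1 - s) := by
          rw [rpow_sub hx, rpow_one]; field_simp
      _ ≤ Gamma (x + s) := by rwa [div_le_iff₀ (by positivity)]
  · rw [div_le_one (by positivity)]
    exact Gamma_add_le_Gamma_mul_rpow hx hs₀ hs₁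

lemma Gamma_add_add_one_div_Gamma_mul_rpow {x s : ℝ} (hx : 0 < x) (hxs : 0 < x + s) :
    Gamma (x + (s + 1)) / (Gamma x * x ^ (s + 1)) =
      Gamma (x + s) / (Gamma x * x ^ s) * ((x + s) / x) := by
  have := (Gamma_pos_of_pos hx).ne'
  rw [← add_assoc, Gamma_add_one hxs.ne', rpow_add_one hx.ne']
  field_simp

lemma tendsto_Gamma_add_div_Gamma_mul_rpow_iff_add_one (s : ℝ) :
    Tendsto (fun x => Gamma (x + s) / (Gamma x * x ^ s)) atTop (𝓝 1) ↔
      Tendsto (fun x => Gamma (x + (s + 1)) / (Gamma x * x ^ (s + 1))) atTop (𝓝 1) := by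
  have hshift : ∀ᶠ x in atTop, Gamma (x + (s + 1)) / (Gamma x * x ^ (s + 1)) =
      Gamma (x + s) / (Gamma x * x ^ s) * ((x + s) / x) := by
    filter_upwards [eventually_gt_atTop 0, eventually_gt_atTop (-s)] with x hx hxs
    exact Gamma_add_add_one_div_Gamma_mul_rpow hx (by linarith)
  have hlin := tendsto_add_div_self_atTop s
  constructor
  · intro h
    simpa using (h.mul hlin).congr' (hshift.mono fun x hx => hx.symm)
  · intro h
    have h' := h.div hlin one_ne_zero
    rw [div_one] at h'
    refine h'.congr' ?_
    filter_upwards [hshift, eventually_gt_atTop 0, eventually_gt_atTop (-s)] with x hx hx₀ hxs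
    rw [Pi.div_apply, hx, mul_div_cancel_right₀ _ (div_pos (by linarith) hx₀).ne']

theorem tendsto_Gamma_add_div_Gamma_mul_rpow (s : ℝ) :
    Tendsto (fun x => Gamma (x + s) / (Gamma x * x ^ s)) atTop (𝓝 1) := by
  have hfract : Tendsto (fun x => Gamma (x + Int.fract s) / (Gamma x * x ^ Int.fract s))
      atTop (𝓝 1) := by
    rcases (Int.fract_nonneg s).eq_or_lt with h | h
    · rw [← h]
      refine tendsto_const_nhds.congr' ?_
      filter_upwards [eventually_gt_atTop 0] with x hx
      simp [(Gamma_pos_of_pos hx).ne']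
    · exact tendsto_Gamma_add_div_Gamma_mul_rpow_of_pos_of_lt_one h (Int.fract_lt_one s)
  rw [← Int.fract_add_floor s]
  induction ⌊s⌋ using Int.induction_on with
  | zero => simpa using hfract
  | succ i ih =>
    rw [tendsto_Gamma_add_div_Gamma_mul_rpow_iff_add_one] at ih
    simpa [add_assoc] using ih
  | pred i ih =>
    rw [tendsto_Gamma_add_div_Gamma_mul_rpow_iff_add_one]
    simpa [add_assoc] using ih

theorem isEquivalent_Gamma_add (s : ℝ) :
    (fun x => Gamma (x + s)) ~[atTop] fun x => Gamma x * x ^ s :=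
  isEquivalent_of_tendsto_one (tendsto_Gamma_add_div_Gamma_mul_rpow s)

end Real

lemma sum_range_one_sub_succ_div_two (k : ℕ) :
    ∑ j ∈ Finset.range k, (1 - ((j : ℝ) + 1)) / 2 = -((k * (k - 1) : ℝ) / 4) := by
  induction k with
  | zero => simp
  | succ k ih => rw [Finset.sum_range_succ, ih]; push_cast; ring

theorem isEquivalent_multivariateGamma (k : ℕ) :
    multivariateGamma k ~[atTop] fun a => Gamma a ^ k / (a / π) ^ ((k * (k - 1) : ℝ) / 4) := by
  have h := (IsEquivalent.refl (u := fun _ : ℝ => π ^ ((k * (k - 1) : ℝ) / 4))).mul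
    (IsEquivalent.finsetProd fun j (_ : j ∈ Finset.range k) =>
      isEquivalent_Gamma_add ((1 - ((j : ℝ) + 1)) / 2))
  refine (h.congr_left (.of_forall fun a => ?_)).congr_right ?_
  · simp [multivariateGamma]
  · filter_upwards [eventually_gt_atTop 0] with a ha
    simp only [Pi.mul_apply, Finset.prod_mul_distrib, Finset.prod_const,
      Finset.card_range, ← rpow_sum_of_pos ha, sum_range_one_sub_succ_div_two, rpow_neg ha.le,
      div_rpow ha.le pi_pos.le]
    field_simp

theorem tendsto_Gamma_pow_div_multivariateGamma (k : ℕ) :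
    Tendsto (fun a => Gamma a ^ k / multivariateGamma k a / (a / π) ^ ((k * (k - 1) : ℝ) / 4))
      atTop (𝓝 1) := by
  set v := fun a : ℝ => Gamma a ^ k / (a / π) ^ ((k * (k - 1) : ℝ) / 4)
  have hv : ∀ᶠ a in atTop, v a / v a = 1 := by
    filter_upwards [eventually_gt_atTop 0] with a ha
    exact div_self (by have := Gamma_pos_of_pos ha; positivity)
  have h := (IsEquivalent.refl (u := v)).div (isEquivalent_multivariateGamma k).symm
  refine (h.tendsto_nhds (tendsto_const_nhds.congr' (hv.mono fun a ha => ha.symm))).congr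
    fun a => ?_
  simp only [v, Pi.div_apply, div_right_comm]

theorem gamma_ratio_asymptotics_general (k : ℕ) :
    Tendsto (fun n : ℕ =>
        (Real.Gamma ((n : ℝ) / 2) ^ k / multivariateGamma k ((n : ℝ) / 2)) /
          ((n : ℝ) / (2 * Real.pi)) ^ ((k * (k - 1) : ℝ) / 4))
      atTop (nhds 1) := by
  have h := (tendsto_Gamma_pow_div_multivariateGamma k).comp
    (tendsto_natCast_atTop_atTop.atTop_div_const two_pos)
  simpa only [Function.comp_def, div_div] using h

/-- For fixed `k ≥ 2`,
`lim_{n→∞} Γ(n/2)^k Γ_k(n/2)⁻¹ / (n/(2π))^{k(k-1)/4} = 1`. -/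
theorem gamma_ratio_asymptotics (k : ℕ) (hk : 2 ≤ k) :
    Tendsto (fun n : ℕ =>
        (Real.Gamma ((n : ℝ) / 2) ^ k / multivariateGamma k ((n : ℝ) / 2)) /
          ((n : ℝ) / (2 * Real.pi)) ^ ((k * (k - 1) : ℝ) / 4))
      atTop (nhds 1) :=
  gamma_ratio_asymptotics_general k
end

section
/- Let k ≥ 2 be fixed and A ⊆ 𝓜_k a Borel set. Let μ_{k,n} be the law of the Gram matrix of k independent uniform points on S_{n-1}, which has density f_{k,n}(M) = det(M)^{(n-k-1)/2} Γ(n/2)^k Γ_k(n/2)^{-1} with respect to λ_k on 𝓜_k. Then lim_{n→∞} n^{-1} ln(μ_{k,n}(A)) = (1/2) ln ‖1_A · det‖_∞, where ‖·‖_∞ is the essential supremum with respect to λ_k. -/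
open MeasureTheory Filter
open scoped Classical

def toSymMat (k : ℕ) (y : {p : Fin k × Fin k // p.1 < p.2} → ℝ) :
    Matrix (Fin k) (Fin k) ℝ :=
  Matrix.of fun i j =>
    if h : i < j then y ⟨(i, j), h⟩
    else if h' : j < i then y ⟨(j, i), h'⟩
    else 1

instance matrixMeasurableSpace (k : ℕ) :
    MeasurableSpace (Matrix (Fin k) (Fin k) ℝ) :=
  inferInstanceAs (MeasurableSpace (Fin k → Fin k → ℝ))

/-- Lebesgue measure `λ_k` on symmetric `k×k` matrices with unit diagonal. -/
noncomputable def lambdaMeasure (k : ℕ) : Measure (Matrix (Fin k) (Fin k) ℝ) :=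
  Measure.map (toSymMat k) volume

/-- The elliptope `𝓜_k`. -/
def elliptope (k : ℕ) : Set (Matrix (Fin k) (Fin k) ℝ) :=
  {M | M.PosSemidef ∧ ∀ i, M i i = 1}

/-- `μ_{k,n}`: the law of the Gram matrix of `k` independent uniform points on
`S_{n-1}`, given via its density `f_{k,n}` with respect to `λ_k`. -/
noncomputable def muMeasure (k n : ℕ) : Measure (Matrix (Fin k) (Fin k) ℝ) :=
  (lambdaMeasure k).withDensity fun M =>
    ENNReal.ofReal
      (if M ∈ elliptope k then
        M.det ^ (((n : ℝ) - k - 1) / 2) *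
          Real.Gamma ((n : ℝ) / 2) ^ k / multivariateGamma k ((n : ℝ) / 2)
      else 0)

/-!
On `A ⊆ 𝓜_k` the density of `μ_{k,n}` is `c_n · det ^ e_n` (`densityConst`, `densityExponent`), so
`n⁻¹ log μ_{k,n}(A) = n⁻¹ log c_n + (e_n / n) · e_n⁻¹ log ∫_A det ^ e_n dλ_k`.
Log-convexity of `Γ` gives `0 ≤ log Γ(x) - log Γ(x - a) ≤ a log x`, so `n⁻¹ log c_n → 0`;
`e_n / n → 1/2`; and `p⁻¹ log ∫_A f ^ p → log ‖1_A f‖_∞` because on the finite-measure set `A`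
the integral lies between `λ(A ∩ {f > t}) t ^ p` (for any `t < ‖1_A f‖_∞`) and `λ(A) ‖1_A f‖_∞ ^ p`.
If `‖1_A det‖_∞ = 0` then `μ_{k,n}(A) = 0` for large `n`, and both sides are `0` by `log 0 = 0`.
-/

open Real Set Topology

section EssSupRpow

variable {α : Type*} [MeasurableSpace α] {μ : Measure α} {s : Set α} {f : α → ℝ} {p t : ℝ}

lemma ae_restrict_le_essSup_indicator (hs : MeasurableSet s)
    (hfb : IsBoundedUnder (· ≤ ·) (ae μ) (s.indicator f)) :
    ∀ᵐ x ∂μ.restrict s, f x ≤ essSup (s.indicator f) μ := by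
  filter_upwards [ae_restrict_of_ae (ae_le_essSup hfb), ae_restrict_mem hs] with x hx hxs
  rwa [indicator_of_mem hxs] at hx

lemma essSup_indicator_nonneg [NeZero μ] (hf0 : ∀ x ∈ s, 0 ≤ f x)
    (hfb : IsBoundedUnder (· ≤ ·) (ae μ) (s.indicator f)) :
    0 ≤ essSup (s.indicator f) μ :=
  le_limsup_of_frequently_le (Eventually.of_forall (indicator_nonneg hf0)).frequently hfb

lemma measureReal_inter_pos_of_lt_essSup [NeZero μ] (hμs : μ s ≠ ⊤) (hf0 : ∀ x ∈ s, 0 ≤ f x)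
    (ht : 0 ≤ t) (htS : t < essSup (s.indicator f) μ) : 0 < μ.real (s ∩ {x | t < f x}) := by
  refine ENNReal.toReal_pos (fun h => htS.not_ge ?_)
    (measure_ne_top_of_subset inter_subset_left hμs)
  refine essSup_le_of_ae_le t ?_ (isCoboundedUnder_le_of_le _ (indicator_nonneg hf0))
  filter_upwards [measure_eq_zero_iff_ae_notMem.1 h] with x hx
  by_cases hxs : x ∈ s
  · rw [indicator_of_mem hxs]
    exact not_lt.1 fun hlt => hx ⟨hxs, hlt⟩
  · rwa [indicator_of_notMem hxs]

lemma integrableOn_rpow_of_isBoundedUnder (hs : MeasurableSet s) (hμs : μ s ≠ ⊤)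
    (hf : Measurable f) (hf0 : ∀ x ∈ s, 0 ≤ f x)
    (hfb : IsBoundedUnder (· ≤ ·) (ae μ) (s.indicator f)) (hp : 0 ≤ p) :
    IntegrableOn (fun x => f x ^ p) s μ := by
  have := isFiniteMeasure_restrict.2 hμs
  refine Integrable.mono' (integrable_const (essSup (s.indicator f) μ ^ p))
    (hf.pow_const p).aestronglyMeasurable ?_
  filter_upwards [ae_restrict_le_essSup_indicator hs hfb, ae_restrict_mem hs] with x hx hxs
  rw [norm_of_nonneg (rpow_nonneg (hf0 x hxs) p)]
  exact rpow_le_rpow (hf0 x hxs) hx hp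

lemma setIntegral_rpow_le (hs : MeasurableSet s) (hμs : μ s ≠ ⊤) (hf0 : ∀ x ∈ s, 0 ≤ f x)
    (hfb : IsBoundedUnder (· ≤ ·) (ae μ) (s.indicator f)) (hp : 0 ≤ p) :
    ∫ x in s, f x ^ p ∂μ ≤ μ.real s * essSup (s.indicator f) μ ^ p := by
  have := isFiniteMeasure_restrict.2 hμs
  rw [← smul_eq_mul, ← setIntegral_const]
  refine integral_mono_of_nonneg ?_ (integrable_const _) ?_
  · filter_upwards [ae_restrict_mem hs] with x hxs using rpow_nonneg (hf0 x hxs) p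
  · filter_upwards [ae_restrict_le_essSup_indicator hs hfb, ae_restrict_mem hs] with x hx hxs
    exact rpow_le_rpow (hf0 x hxs) hx hp

lemma measureReal_inter_mul_rpow_le_setIntegral_rpow (hs : MeasurableSet s) (hμs : μ s ≠ ⊤)
    (hf : Measurable f) (hf0 : ∀ x ∈ s, 0 ≤ f x)
    (hfb : IsBoundedUnder (· ≤ ·) (ae μ) (s.indicator f)) (ht : 0 ≤ t) (hp : 0 ≤ p) :
    μ.real (s ∩ {x | t < f x}) * t ^ p ≤ ∫ x in s, f x ^ p ∂μ := by
  have hint := integrableOn_rpow_of_isBoundedUnder hs hμs hf hf0 hfb hp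
  have hB : MeasurableSet (s ∩ {x | t < f x}) := hs.inter (measurableSet_lt measurable_const hf)
  calc μ.real (s ∩ {x | t < f x}) * t ^ p = ∫ _ in s ∩ {x | t < f x}, t ^ p ∂μ := by
        rw [setIntegral_const, smul_eq_mul]
    _ ≤ ∫ x in s ∩ {x | t < f x}, f x ^ p ∂μ :=
        setIntegral_mono_on (integrableOn_const (measure_ne_top_of_subset inter_subset_left hμs))
          (hint.mono_set inter_subset_left) hB fun x hx => rpow_le_rpow ht hx.2.le hp
    _ ≤ ∫ x in s, f x ^ p ∂μ :=
        setIntegral_mono_set hint ((ae_restrict_mem hs).mono fun x hx => rpow_nonneg (hf0 x hx) p)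
          inter_subset_left.eventuallyLE

lemma setIntegral_rpow_pos [NeZero μ] (hs : MeasurableSet s) (hμs : μ s ≠ ⊤)
    (hf : Measurable f) (hf0 : ∀ x ∈ s, 0 ≤ f x)
    (hfb : IsBoundedUnder (· ≤ ·) (ae μ) (s.indicator f)) (hS : 0 < essSup (s.indicator f) μ)
    (hp : 0 ≤ p) : 0 < ∫ x in s, f x ^ p ∂μ := by
  have hS2 : 0 < essSup (s.indicator f) μ / 2 := by positivity
  exact (mul_pos (measureReal_inter_pos_of_lt_essSup hμs hf0 hS2.le (by linarith))
    (rpow_pos_of_pos hS2 p)).trans_le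
      (measureReal_inter_mul_rpow_le_setIntegral_rpow hs hμs hf hf0 hfb hS2.le hp)

lemma tendsto_inv_mul_add_mul_atTop (c L : ℝ) :
    Tendsto (fun p : ℝ => p⁻¹ * (c + p * L)) atTop (𝓝 L) := by
  have h := (tendsto_inv_atTop_zero.mul_const c).add_const L
  rw [zero_mul, zero_add] at h
  refine h.congr' ?_
  filter_upwards [eventually_ne_atTop 0] with p hp
  field_simp

theorem tendsto_inv_mul_log_setIntegral_rpow [NeZero μ] (hs : MeasurableSet s) (hμs : μ s ≠ ⊤)
    (hf : Measurable f) (hf0 : ∀ x ∈ s, 0 ≤ f x)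
    (hfb : IsBoundedUnder (· ≤ ·) (ae μ) (s.indicator f)) (hS : 0 < essSup (s.indicator f) μ) :
    Tendsto (fun p : ℝ => p⁻¹ * log (∫ x in s, f x ^ p ∂μ)) atTop
      (𝓝 (log (essSup (s.indicator f) μ))) := by
  set S := essSup (s.indicator f) μ
  have lower : ∀ t, 0 < t → t < S → ∀ p, 0 < p →
      p⁻¹ * (log (μ.real (s ∩ {x | t < f x})) + p * log t) ≤ p⁻¹ * log (∫ x in s, f x ^ p ∂μ) := by
    intro t ht htS p hp
    have hm := measureReal_inter_pos_of_lt_essSup hμs hf0 ht.le htS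
    rw [← log_rpow ht, ← log_mul hm.ne' (rpow_pos_of_pos ht p).ne']
    gcongr
    exact measureReal_inter_mul_rpow_le_setIntegral_rpow hs hμs hf hf0 hfb ht.le hp.le
  have upper : ∀ p, 0 < p →
      p⁻¹ * log (∫ x in s, f x ^ p ∂μ) ≤ p⁻¹ * (log (μ.real s) + p * log S) := by
    intro p hp
    have hI := setIntegral_rpow_pos hs hμs hf hf0 hfb hS hp.le
    have hμs_pos : 0 < μ.real s :=
      (measureReal_inter_pos_of_lt_essSup hμs hf0 le_rfl hS).trans_le
        (measureReal_mono inter_subset_left hμs)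
    rw [← log_rpow hS, ← log_mul hμs_pos.ne' (rpow_pos_of_pos hS p).ne']
    gcongr
    exact setIntegral_rpow_le hs hμs hf0 hfb hp.le
  refine tendsto_order.2 ⟨fun a ha => ?_, fun a ha => ?_⟩
  · obtain ⟨t, hat, htS⟩ := exists_between ((lt_log_iff_exp_lt hS).1 ha)
    have ht : 0 < t := (exp_pos a).trans hat
    filter_upwards [(tendsto_order.1 (tendsto_inv_mul_add_mul_atTop _ (log t))).1 a
      ((lt_log_iff_exp_lt ht).2 hat), eventually_gt_atTop 0] with p h hp
    exact h.trans_le (lower t ht htS p hp)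
  · filter_upwards [(tendsto_order.1 (tendsto_inv_mul_add_mul_atTop _ (log S))).2 a ha,
      eventually_gt_atTop 0] with p h hp
    exact (upper p hp).trans_lt h

end EssSupRpow

lemma log_Gamma_sub_log_Gamma_sub_le {x a : ℝ} (ha : 0 ≤ a) (hax : a < x) :
    log (Gamma x) - log (Gamma (x - a)) ≤ a * log x := by
  rcases ha.eq_or_lt with rfl | ha
  · simp
  -- the slope of `log ∘ Γ` on `[x - a, x]` is at most its slope `log x` on `[x, x + 1]`
  have hslope := convexOn_log_Gamma.slope_mono_adjacent (x := x - a) (y := x) (z := x + 1)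
    (mem_Ioi.2 (by linarith)) (mem_Ioi.2 (by linarith)) (by linarith) (by linarith)
  have hx : 0 < x := ha.trans hax
  simp only [Function.comp_apply, Gamma_add_one hx.ne', sub_sub_cancel, add_sub_cancel_left,
    div_one, log_mul hx.ne' (Gamma_pos_of_pos hx).ne', add_sub_cancel_right] at hslope
  rwa [div_le_iff₀ ha, mul_comm] at hslope

lemma log_Gamma_sub_log_Gamma_sub_nonneg {x a : ℝ} (ha : 0 ≤ a) (hax : a + 2 ≤ x) :
    0 ≤ log (Gamma x) - log (Gamma (x - a)) := by
  have h2 : (2 : ℝ) ≤ x - a := by linarith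
  rw [sub_nonneg]
  exact log_le_log (Gamma_pos_of_pos (by linarith))
    (Gamma_strictMonoOn_Ici.monotoneOn h2 (by rw [mem_Ici]; linarith) (by linarith))

lemma tendsto_inv_mul_log_Gamma_sub_log_Gamma_sub {a : ℝ} (ha : 0 ≤ a) :
    Tendsto (fun x => x⁻¹ * (log (Gamma x) - log (Gamma (x - a)))) atTop (𝓝 0) := by
  have hlog : Tendsto (fun x => a * (x⁻¹ * log x)) atTop (𝓝 0) := by
    simpa [div_eq_inv_mul] using (tendsto_pow_log_div_mul_add_atTop 1 0 1 one_ne_zero).const_mul a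
  refine tendsto_of_tendsto_of_tendsto_of_le_of_le' tendsto_const_nhds hlog ?_ ?_
  · filter_upwards [eventually_ge_atTop (a + 2)] with x hx
    exact mul_nonneg (inv_nonneg.2 (by linarith)) (log_Gamma_sub_log_Gamma_sub_nonneg ha hx)
  · filter_upwards [eventually_gt_atTop a] with x hx
    rw [mul_left_comm]
    exact mul_le_mul_of_nonneg_left (log_Gamma_sub_log_Gamma_sub_le ha hx)
      (inv_nonneg.2 (ha.trans hx.le))

instance matrixBorelSpace (k : ℕ) : BorelSpace (Matrix (Fin k) (Fin k) ℝ) :=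
  inferInstanceAs (BorelSpace (Fin k → Fin k → ℝ))

lemma measurable_toSymMat (k : ℕ) : Measurable (toSymMat k) := by
  refine measurable_pi_lambda _ fun i => measurable_pi_lambda _ fun j => ?_
  simp only [toSymMat, Matrix.of_apply]
  split_ifs <;> fun_prop

lemma measurable_det (k : ℕ) : Measurable fun M : Matrix (Fin k) (Fin k) ℝ => M.det :=
  continuous_id.matrix_det.measurable

instance lambdaMeasure_neZero (k : ℕ) : NeZero (lambdaMeasure k) :=
  ⟨(Measure.map_ne_zero_iff (measurable_toSymMat k).aemeasurable).2 (NeZero.ne _)⟩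

section Elliptope

variable {k : ℕ} {M : Matrix (Fin k) (Fin k) ℝ}

lemma abs_apply_le_one_of_mem_elliptope (hM : M ∈ elliptope k) (i j : Fin k) : |M i j| ≤ 1 := by
  have hdet := (hM.1.submatrix ![i, j]).det_nonneg
  have hsymm : M j i = M i j := by simpa using congrFun (congrFun hM.1.1 i) j
  simp only [Matrix.det_fin_two, Matrix.submatrix_apply, Matrix.cons_val_zero,
    Matrix.cons_val_one, hM.2 i, hM.2 j, hsymm] at hdet
  exact abs_le_one_iff_mul_self_le_one.2 (by linarith)

lemma det_le_factorial_of_mem_elliptope (hM : M ∈ elliptope k) : M.det ≤ k.factorial := by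
  have h := Matrix.det_le (abv := AbsoluteValue.abs) (abs_apply_le_one_of_mem_elliptope hM)
  simp only [AbsoluteValue.abs_apply, Fintype.card_fin, one_pow, nsmul_eq_mul, mul_one] at h
  exact (le_abs_self _).trans h

lemma toSymMat_apply_of_lt (y : {p : Fin k × Fin k // p.1 < p.2} → ℝ) {i j : Fin k} (h : i < j) :
    toSymMat k y i j = y ⟨(i, j), h⟩ := by
  simp [toSymMat, h]

lemma lambdaMeasure_ne_top_of_subset_elliptope {A : Set (Matrix (Fin k) (Fin k) ℝ)}
    (hA : MeasurableSet A) (hAk : A ⊆ elliptope k) : lambdaMeasure k A ≠ ⊤ := by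
  rw [lambdaMeasure, Measure.map_apply (measurable_toSymMat k) hA]
  have hcube : toSymMat k ⁻¹' A ⊆ univ.pi fun _ => Icc (-1 : ℝ) 1 := fun y hy p _ => by
    have := abs_apply_le_one_of_mem_elliptope (hAk hy) p.1.1 p.1.2
    rwa [toSymMat_apply_of_lt y p.2, abs_le] at this
  refine ne_top_of_le_ne_top ?_ (measure_mono hcube)
  rw [volume_pi_pi]
  exact ENNReal.prod_ne_top fun _ _ => by simp

end Elliptope

noncomputable def densityExponent (k n : ℕ) : ℝ := ((n : ℝ) - k - 1) / 2

noncomputable def densityConst (k n : ℕ) : ℝ :=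
  Gamma ((n : ℝ) / 2) ^ k / multivariateGamma k ((n : ℝ) / 2)

section Density

variable {k n : ℕ}

lemma Gamma_half_sub_pos {j : ℕ} (hj : j < n) : 0 < Gamma ((n : ℝ) / 2 - j / 2) := by
  have : (j : ℝ) < n := by exact_mod_cast hj
  exact Gamma_pos_of_pos (by linarith)

lemma multivariateGamma_half_eq (k n : ℕ) :
    multivariateGamma k ((n : ℝ) / 2) =
      π ^ ((k * (k - 1) : ℝ) / 4) * ∏ j ∈ Finset.range k, Gamma ((n : ℝ) / 2 - j / 2) := by
  simp only [multivariateGamma]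
  congr 2 with j
  ring_nf

lemma Gamma_half_pos (hn : 0 < n) : 0 < Gamma ((n : ℝ) / 2) := by
  simpa using Gamma_half_sub_pos hn

lemma densityConst_pos (hn : k < n) : 0 < densityConst k n := by
  rw [densityConst, multivariateGamma_half_eq]
  refine div_pos (pow_pos (Gamma_half_pos (by omega)) k)
    (mul_pos (by positivity) (Finset.prod_pos ?_))
  exact fun j hj => Gamma_half_sub_pos ((Finset.mem_range.1 hj).trans hn)

lemma log_densityConst (hn : k < n) :
    log (densityConst k n) = ∑ j ∈ Finset.range k,
      (log (Gamma ((n : ℝ) / 2)) - log (Gamma ((n : ℝ) / 2 - j / 2))) -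
        (k * (k - 1) : ℝ) / 4 * log π := by
  have hΓ : ∀ j ∈ Finset.range k, Gamma ((n : ℝ) / 2 - j / 2) ≠ 0 :=
    fun j hj => (Gamma_half_sub_pos ((Finset.mem_range.1 hj).trans hn)).ne'
  have hΓ0 : Gamma ((n : ℝ) / 2) ≠ 0 := (Gamma_half_pos (by omega)).ne'
  rw [densityConst, multivariateGamma_half_eq, log_div (pow_ne_zero _ hΓ0)
    (mul_ne_zero (by positivity) (Finset.prod_ne_zero_iff.2 hΓ)), log_mul (by positivity)
    (Finset.prod_ne_zero_iff.2 hΓ), log_prod hΓ, log_pow, log_rpow pi_pos, Finset.sum_sub_distrib,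
    Finset.sum_const, Finset.card_range, nsmul_eq_mul]
  ring

lemma tendsto_inv_mul_log_densityConst (k : ℕ) :
    Tendsto (fun n : ℕ => (n : ℝ)⁻¹ * log (densityConst k n)) atTop (𝓝 0) := by
  have hhalf : Tendsto (fun n : ℕ => (n : ℝ) / 2) atTop atTop :=
    tendsto_natCast_atTop_atTop.atTop_div_const two_pos
  have h := (tendsto_finsetSum (Finset.range k) fun j _ =>
    ((tendsto_inv_mul_log_Gamma_sub_log_Gamma_sub (a := (j : ℝ) / 2) (by positivity)).comp
      hhalf).const_mul 2⁻¹).sub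
    (tendsto_inv_atTop_nhds_zero_nat.mul_const ((k * (k - 1) : ℝ) / 4 * log π))
  simp only [mul_zero, Finset.sum_const_zero, zero_mul, sub_zero] at h
  refine h.congr' ?_
  filter_upwards [eventually_gt_atTop k] with n hn
  rw [log_densityConst hn, mul_sub ((n : ℝ)⁻¹), Finset.mul_sum]
  congr 1
  refine Finset.sum_congr rfl fun j _ => ?_
  simp only [Function.comp_apply]
  field_simp

lemma densityExponent_nonneg (hn : k < n) : 0 ≤ densityExponent k n := by
  have : (k : ℝ) + 1 ≤ n := by exact_mod_cast hn
  rw [densityExponent]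
  linarith

lemma tendsto_densityExponent_atTop (k : ℕ) : Tendsto (densityExponent k) atTop atTop :=
  ((tendsto_natCast_atTop_atTop.atTop_add (tendsto_const_nhds (x := -(k : ℝ) - 1))).atTop_div_const
    two_pos).congr fun n => by rw [densityExponent]; ring

lemma tendsto_densityExponent_mul_inv (k : ℕ) :
    Tendsto (fun n : ℕ => densityExponent k n * (n : ℝ)⁻¹) atTop (𝓝 (1 / 2)) := by
  have h := ((tendsto_inv_atTop_nhds_zero_nat (𝕜 := ℝ)).const_mul (-(k : ℝ) - 1)).const_add 1
    |>.div_const 2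
  rw [mul_zero, add_zero] at h
  refine h.congr' ?_
  filter_upwards [eventually_ne_atTop 0] with n hn
  rw [densityExponent]
  field_simp
  ring

end Density

section Gram

variable {k n : ℕ} {A : Set (Matrix (Fin k) (Fin k) ℝ)}

lemma isBoundedUnder_indicator_det (hAk : A ⊆ elliptope k) :
    IsBoundedUnder (· ≤ ·) (ae (lambdaMeasure k)) (A.indicator fun M => M.det) := by
  refine isBoundedUnder_of ⟨k.factorial, fun M => ?_⟩
  by_cases hM : M ∈ A
  · simpa [indicator_of_mem hM] using det_le_factorial_of_mem_elliptope (hAk hM)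
  · simp [indicator_of_notMem hM]

lemma muMeasure_apply_toReal (hA : MeasurableSet A) (hAk : A ⊆ elliptope k) (hn : k < n) :
    (muMeasure k n A).toReal =
      densityConst k n * ∫ M in A, M.det ^ densityExponent k n ∂lambdaMeasure k := by
  have hdens : EqOn (fun M => ENNReal.ofReal (if M ∈ elliptope k then
        M.det ^ (((n : ℝ) - k - 1) / 2) *
          Gamma ((n : ℝ) / 2) ^ k / multivariateGamma k ((n : ℝ) / 2) else 0))
      (fun M => ENNReal.ofReal (densityConst k n * M.det ^ densityExponent k n)) A := by
    intro M hM
    simp only [if_pos (hAk hM), densityConst, densityExponent]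
    ring_nf
  have hint := integrableOn_rpow_of_isBoundedUnder hA
    (lambdaMeasure_ne_top_of_subset_elliptope hA hAk) (measurable_det k)
    (fun M hM => (hAk hM).1.det_nonneg) (isBoundedUnder_indicator_det hAk)
    (densityExponent_nonneg hn)
  rw [muMeasure, withDensity_apply _ hA, setLIntegral_congr_fun hA hdens,
    ← ofReal_integral_eq_lintegral_ofReal (hint.const_mul _), integral_const_mul,
    ENNReal.toReal_ofReal]
  · exact mul_nonneg (densityConst_pos hn).le
      (setIntegral_nonneg hA fun M hM => rpow_nonneg (hAk hM).1.det_nonneg _)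
  · filter_upwards [ae_restrict_mem hA] with M hM
    exact mul_nonneg (densityConst_pos hn).le (rpow_nonneg (hAk hM).1.det_nonneg _)

end Gram

theorem large_deviation_sphere_general (k : ℕ)
    (A : Set (Matrix (Fin k) (Fin k) ℝ)) (hA : MeasurableSet A)
    (hAk : A ⊆ elliptope k) :
    Tendsto (fun n : ℕ => (n : ℝ)⁻¹ * Real.log ((muMeasure k n A).toReal))
      atTop
      (nhds ((1 / 2) *
        Real.log (essSup (A.indicator fun M => M.det) (lambdaMeasure k)))) := by
  have hAfin := lambdaMeasure_ne_top_of_subset_elliptope hA hAk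
  have hdet0 : ∀ M ∈ A, 0 ≤ M.det := fun M hM => (hAk hM).1.det_nonneg
  have hbdd := isBoundedUnder_indicator_det hAk
  have he := tendsto_densityExponent_atTop k
  rcases (essSup_indicator_nonneg hdet0 hbdd).eq_or_lt with hS | hS
  · rw [← hS, log_zero, mul_zero]
    refine tendsto_const_nhds.congr' ?_
    filter_upwards [eventually_gt_atTop k, he.eventually_gt_atTop 0] with n hn hen
    have hI := setIntegral_rpow_le hA hAfin hdet0 hbdd hen.le
    rw [← hS, zero_rpow hen.ne', mul_zero] at hI
    rw [muMeasure_apply_toReal hA hAk hn,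
      hI.antisymm (setIntegral_nonneg hA fun M hM => rpow_nonneg (hdet0 M hM) _)]
    simp
  · have h := (tendsto_inv_mul_log_densityConst k).add ((tendsto_densityExponent_mul_inv k).mul
      ((tendsto_inv_mul_log_setIntegral_rpow hA hAfin (measurable_det k) hdet0 hbdd hS).comp he))
    rw [zero_add] at h
    refine h.congr' ?_
    filter_upwards [eventually_gt_atTop k, he.eventually_gt_atTop 0] with n hn hen
    rw [muMeasure_apply_toReal hA hAk hn, log_mul (densityConst_pos hn).ne'
      (setIntegral_rpow_pos hA hAfin (measurable_det k) hdet0 hbdd hS hen.le).ne']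
    simp only [Function.comp_apply]
    field_simp

/-- Large deviation principle on the sphere: for Borel `A ⊆ 𝓜_k`,
`n⁻¹ ln μ_{k,n}(A) → (1/2) ln ‖1_A · det‖_∞`. -/
theorem large_deviation_sphere (k : ℕ) (hk : 2 ≤ k)
    (A : Set (Matrix (Fin k) (Fin k) ℝ)) (hA : MeasurableSet A)
    (hAk : A ⊆ elliptope k) :
    Tendsto (fun n : ℕ => (n : ℝ)⁻¹ * Real.log ((muMeasure k n A).toReal))
      atTop
      (nhds ((1 / 2) *
        Real.log (essSup (A.indicator fun M => M.det) (lambdaMeasure k)))) :=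
  large_deviation_sphere_general k A hA hAk
end

section
/- Let X and Y be finite sets with Z = X ∩ Y and Q = X ∪ Y. Let A ∈ ℝ^{X×X} and B ∈ ℝ^{Y×Y} be symmetric positive definite matrices whose Z×Z submatrices are both equal to C ∈ ℝ^{Z×Z}. Let Ã, B̃, C̃ ∈ ℝ^{Q×Q} be obtained from A^{-1}, B^{-1}, C^{-1} by extending with zeros, and set D := (Ã + B̃ - C̃)^{-1}. Then D is positive definite. -/
open Matrix

variable {Q : Type*} [Fintype Q] [DecidableEq Q]

/-- Zero-extension of a matrix indexed by a finset `X ⊆ Q` to a `Q × Q` matrix. -/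
def zeroExtend {X : Finset Q} (A : Matrix X X ℝ) : Matrix Q Q ℝ :=
  Matrix.of fun p q =>
    if hp : p ∈ X then if hq : q ∈ X then A ⟨p, hp⟩ ⟨q, hq⟩ else 0 else 0

/-!
The matrix `M = Ã + B̃ - C̃` is itself positive definite, so its inverse is. Its quadratic form at
`v` is `q_A(v|X) + q_B(v|Y) - q_C(v|Z)`, where `q_N(w) = wᵀ N⁻¹ w`. Since `C` is a principal
submatrix of both `A` and `B`, `q_C(v|Z)` is at most `q_A(v|X)` and at most `q_B(v|Y)`: by the
variational formula `wᵀ N⁻¹ w = max_x (2 xᵀw - xᵀ N x)`, restricting `x` to vectors supported on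
`Z` can only lower the maximum. As `v ≠ 0` is nonzero on `X` or on `Y`, one of the two
remaining terms is positive.
-/

namespace Matrix

variable {m n R : Type*} [Fintype m] [Fintype n]

section ExtendByZero

variable [CommSemiring R] {e : n → m}

theorem extend_zero_dotProduct (he : Function.Injective e) (u : n → R) (w : m → R) :
    Function.extend e u 0 ⬝ᵥ w = u ⬝ᵥ (w ∘ e) := by
  refine (Fintype.sum_of_injective e he _ _ (fun i hi => ?_) fun j => ?_).symm
  · simp [Function.extend_apply' _ _ _ (by simpa using hi)]
  · simp [he.extend_apply]

theorem mulVec_extend_zero (he : Function.Injective e) (M : Matrix m m R) (u : n → R) :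
    M *ᵥ Function.extend e u 0 = M.submatrix id e *ᵥ u := by
  ext i
  rw [mulVec, dotProduct_comm, extend_zero_dotProduct he, dotProduct_comm]
  rfl

theorem extend_zero_dotProduct_mulVec (he : Function.Injective e) (M : Matrix m m R)
    (u : n → R) :
    Function.extend e u 0 ⬝ᵥ M *ᵥ Function.extend e u 0 = u ⬝ᵥ M.submatrix e e *ᵥ u := by
  rw [extend_zero_dotProduct he, mulVec_extend_zero he]
  rfl

end ExtendByZero

variable [DecidableEq n]

theorem dotProduct_nonsing_inv_mulVec_eq [CommRing R] {M : Matrix n n R} (hM : IsUnit M.det)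
    (w : n → R) :
    w ⬝ᵥ M⁻¹ *ᵥ w = 2 * (M⁻¹ *ᵥ w ⬝ᵥ w) - M⁻¹ *ᵥ w ⬝ᵥ M *ᵥ (M⁻¹ *ᵥ w) := by
  rw [mulVec_mulVec, mul_nonsing_inv M hM, one_mulVec, dotProduct_comm w]
  ring

variable {M : Matrix n n ℝ}

theorem PosSemidef.two_mul_dotProduct_sub_le (hM : M.PosSemidef) (hdet : IsUnit M.det)
    (x w : n → ℝ) : 2 * (x ⬝ᵥ w) - x ⬝ᵥ M *ᵥ x ≤ w ⬝ᵥ M⁻¹ *ᵥ w := by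
  set s := M⁻¹ *ᵥ w
  have hs : M *ᵥ s = w := by rw [mulVec_mulVec, mul_nonsing_inv M hdet, one_mulVec]
  have hsx : s ⬝ᵥ M *ᵥ x = x ⬝ᵥ w := by
    rw [dotProduct_mulVec, ← mulVec_transpose, ← conjTranspose_eq_transpose_of_trivial, hM.1, hs, dotProduct_comm]
  have h := hM.dotProduct_mulVec_nonneg (s - x)
  simp only [star_trivial, mulVec_sub, dotProduct_sub, sub_dotProduct, hs, hsx] at h
  rw [dotProduct_comm w]
  linarith

theorem PosDef.dotProduct_inv_submatrix_mulVec_le [DecidableEq m] (hM : M.PosDef)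
    {e : m → n} (he : Function.Injective e) (w : n → ℝ) :
    w ∘ e ⬝ᵥ (M.submatrix e e)⁻¹ *ᵥ (w ∘ e) ≤ w ⬝ᵥ M⁻¹ *ᵥ w := by
  set u := (M.submatrix e e)⁻¹ *ᵥ (w ∘ e)
  calc w ∘ e ⬝ᵥ (M.submatrix e e)⁻¹ *ᵥ (w ∘ e)
      = 2 * (u ⬝ᵥ w ∘ e) - u ⬝ᵥ M.submatrix e e *ᵥ u :=
        dotProduct_nonsing_inv_mulVec_eq (hM.submatrix he).det_pos.ne'.isUnit _
    _ = 2 * (Function.extend e u 0 ⬝ᵥ w) -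
          Function.extend e u 0 ⬝ᵥ M *ᵥ Function.extend e u 0 := by
        rw [extend_zero_dotProduct he, extend_zero_dotProduct_mulVec he]
    _ ≤ w ⬝ᵥ M⁻¹ *ᵥ w := hM.posSemidef.two_mul_dotProduct_sub_le hM.det_pos.ne'.isUnit _ _

end Matrix

section ZeroExtend

variable {X : Finset Q}

omit [Fintype Q] in
theorem Matrix.IsHermitian.zeroExtend {M : Matrix X X ℝ} (hM : M.IsHermitian) :
    (zeroExtend M).IsHermitian := by
  ext p q
  by_cases hp : p ∈ X <;> by_cases hq : q ∈ X <;> simp [_root_.zeroExtend, hp, hq]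
  exact hM.apply ⟨p, hp⟩ ⟨q, hq⟩

theorem zeroExtend_mulVec (M : Matrix X X ℝ) (v : Q → ℝ) :
    zeroExtend M *ᵥ v = Function.extend Subtype.val (M *ᵥ (v ∘ Subtype.val)) 0 := by
  ext p
  by_cases hp : p ∈ X
  · rw [show p = ((⟨p, hp⟩ : X) : Q) from rfl, Subtype.val_injective.extend_apply]
    refine (Fintype.sum_of_injective _ Subtype.val_injective _ _ (fun q hq => ?_)
      fun q => ?_).symm
    · simp [zeroExtend, hp, show q ∉ X by simpa using hq]
    · simp [zeroExtend, hp]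
  · rw [Function.extend_apply' _ _ _ (by simpa using hp)]
    simp [mulVec, dotProduct, zeroExtend, hp]

theorem dotProduct_zeroExtend_mulVec (M : Matrix X X ℝ) (v : Q → ℝ) :
    v ⬝ᵥ zeroExtend M *ᵥ v = v ∘ Subtype.val ⬝ᵥ M *ᵥ (v ∘ Subtype.val) := by
  rw [zeroExtend_mulVec, dotProduct_comm, extend_zero_dotProduct Subtype.val_injective,
    dotProduct_comm]

end ZeroExtend

theorem Function.comp_val_ne_zero_or_of_union_eq_univ {X Y : Finset Q}
    (hQ : X ∪ Y = Finset.univ) {v : Q → ℝ} (hv : v ≠ 0) :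
    v ∘ ((↑) : X → Q) ≠ 0 ∨ v ∘ ((↑) : Y → Q) ≠ 0 := by
  obtain ⟨p, hp⟩ := Function.ne_iff.mp hv
  rcases Finset.mem_union.mp (hQ ▸ Finset.mem_univ p) with hpX | hpY
  · exact .inl (Function.ne_iff.mpr ⟨⟨p, hpX⟩, hp⟩)
  · exact .inr (Function.ne_iff.mpr ⟨⟨p, hpY⟩, hp⟩)

/-- The conditionally independent coupling `D = (Ã + B̃ - C̃)⁻¹` of two positive
definite matrices `A`, `B` agreeing on `Z = X ∩ Y` is positive definite. -/
theorem coupling_posDef (X Y : Finset Q) (hQ : X ∪ Y = Finset.univ)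
    (A : Matrix X X ℝ) (B : Matrix Y Y ℝ)
    (C : Matrix (X ∩ Y : Finset Q) (X ∩ Y : Finset Q) ℝ)
    (hA : A.PosDef) (hB : B.PosDef)
    (hAC : ∀ i j : (X ∩ Y : Finset Q),
      A ⟨i, Finset.mem_of_mem_inter_left i.2⟩ ⟨j, Finset.mem_of_mem_inter_left j.2⟩ = C i j)
    (hBC : ∀ i j : (X ∩ Y : Finset Q),
      B ⟨i, Finset.mem_of_mem_inter_right i.2⟩ ⟨j, Finset.mem_of_mem_inter_right j.2⟩ = C i j) :
    (zeroExtend A⁻¹ + zeroExtend B⁻¹ - zeroExtend C⁻¹)⁻¹.PosDef := by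
  set eX : (X ∩ Y : Finset Q) → X := fun i => ⟨i, Finset.mem_of_mem_inter_left i.2⟩
  set eY : (X ∩ Y : Finset Q) → Y := fun i => ⟨i, Finset.mem_of_mem_inter_right i.2⟩
  have heX : Function.Injective eX := fun i j h => Subtype.ext (congrArg (Subtype.val : X → Q) h)
  have heY : Function.Injective eY := fun i j h => Subtype.ext (congrArg (Subtype.val : Y → Q) h)
  have hCA : A.submatrix eX eX = C := Matrix.ext hAC
  have hCB : B.submatrix eY eY = C := Matrix.ext hBC
  have hC : C.PosDef := hCA ▸ hA.submatrix heX
  refine PosDef.inv <| .of_dotProduct_mulVec_pos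
    ((hA.inv.1.zeroExtend.add hB.inv.1.zeroExtend).sub hC.inv.1.zeroExtend) fun v hv => ?_
  simp only [star_trivial, add_mulVec, sub_mulVec, dotProduct_add, dotProduct_sub,
    dotProduct_zeroExtend_mulVec]
  have hCA_le : v ∘ (↑) ⬝ᵥ C⁻¹ *ᵥ (v ∘ (↑)) ≤ v ∘ (↑) ⬝ᵥ A⁻¹ *ᵥ (v ∘ (↑)) :=
    hCA ▸ hA.dotProduct_inv_submatrix_mulVec_le heX (v ∘ (↑))
  have hCB_le : v ∘ (↑) ⬝ᵥ C⁻¹ *ᵥ (v ∘ (↑)) ≤ v ∘ (↑) ⬝ᵥ B⁻¹ *ᵥ (v ∘ (↑)) :=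
    hCB ▸ hB.dotProduct_inv_submatrix_mulVec_le heY (v ∘ (↑))
  have hA_nonneg := hA.inv.posSemidef.dotProduct_mulVec_nonneg (v ∘ (↑))
  have hB_nonneg := hB.inv.posSemidef.dotProduct_mulVec_nonneg (v ∘ (↑))
  simp only [star_trivial] at hA_nonneg hB_nonneg
  rcases Function.comp_val_ne_zero_or_of_union_eq_univ hQ hv with hX | hY
  · have hA_pos := hA.inv.dotProduct_mulVec_pos hX
    simp only [star_trivial] at hA_pos
    linarith
  · have hB_pos := hB.inv.dotProduct_mulVec_pos hY
    simp only [star_trivial] at hB_pos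
    linarith
end

section
/- With the setup of the conditional-independent coupling (X, Y finite sets, Z = X ∩ Y, Q = X ∪ Y, A, B positive definite with common Z×Z submatrix C, and D = (Ã + B̃ - C̃)^{-1}), the X×X submatrix of D equals A and the Y×Y submatrix of D equals B. -/
open Matrix

variable {Q : Type*} [Fintype Q] [DecidableEq Q]

/-!
Write `p, q, z` for the coordinate projections of `ℝ^Q` onto `X, Y, Z` and
`a, b, c, a', b', c'` for the zero-extensions of `A, B, C, A⁻¹, B⁻¹, C⁻¹`. In the ring of
`Q × Q` matrices, `p` and `q` are commuting idempotents with `pq = z` and `p + q - z = 1`, the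
elements `a, b, c` live in the corners `pRp, qRq, zRz` with `zaz = zbz = c`, and `a', b', c'`
invert them there. These relations alone make
  `E = a + b - c + (a - c) c' (b - c) + (b - c) c' (a - c)`
(the covariance under which `X ∖ Z` and `Y ∖ Z` are conditionally independent given `Z`) satisfy
`pEp = a`, `qEq = b`, and
  `a'E = p + c'b - z`,  `b'E = q + c'a - z`,  `c'E = c'a + c'b - z`,
so `(a' + b' - c') E = p + q - z = 1` and `E = D`.
-/

section Coupling

variable {R : Type*} [Ring R]

def coupling (a b c c' : R) : R :=
  a + b - c + (a - c) * c' * (b - c) + (b - c) * c' * (a - c)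

lemma coupling_comm (a b c c' : R) : coupling a b c c' = coupling b a c c' := by
  unfold coupling; abel

structure IsCouplingData (p q z a b c c' : R) : Prop where
  p_mul_p : p * p = p
  q_mul_q : q * q = q
  p_mul_q : p * q = z
  q_mul_p : q * p = z
  add_sub_eq_one : p + q - z = 1
  p_mul_a : p * a = a
  a_mul_p : a * p = a
  q_mul_b : q * b = b
  b_mul_q : b * q = b
  z_mul_a_mul_z : z * a * z = c
  z_mul_b_mul_z : z * b * z = c
  c'_mul_c : c' * c = z
  c_mul_c' : c * c' = z
  z_mul_c' : z * c' = c'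
  c'_mul_z : c' * z = c'

namespace IsCouplingData

variable {p q z a b c c' : R}

lemma symm (h : IsCouplingData p q z a b c c') : IsCouplingData q p z b a c c' where
  p_mul_p := h.q_mul_q
  q_mul_q := h.p_mul_p
  p_mul_q := h.q_mul_p
  q_mul_p := h.p_mul_q
  add_sub_eq_one := by rw [add_comm, h.add_sub_eq_one]
  p_mul_a := h.q_mul_b
  a_mul_p := h.b_mul_q
  q_mul_b := h.p_mul_a
  b_mul_q := h.a_mul_p
  z_mul_a_mul_z := h.z_mul_b_mul_z
  z_mul_b_mul_z := h.z_mul_a_mul_z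
  c'_mul_c := h.c'_mul_c
  c_mul_c' := h.c_mul_c'
  z_mul_c' := h.z_mul_c'
  c'_mul_z := h.c'_mul_z

lemma p_mul_z (h : IsCouplingData p q z a b c c') : p * z = z := by
  rw [← h.p_mul_q, ← mul_assoc, h.p_mul_p]

lemma z_mul_p (h : IsCouplingData p q z a b c c') : z * p = z := by
  rw [← h.q_mul_p, mul_assoc, h.p_mul_p]

lemma z_mul_z (h : IsCouplingData p q z a b c c') : z * z = z :=
  calc z * z = z * p * q := by rw [mul_assoc, h.p_mul_q]
    _ = z := by rw [h.z_mul_p, h.symm.z_mul_p]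

lemma z_mul_c (h : IsCouplingData p q z a b c c') : z * c = c := by
  rw [← h.z_mul_a_mul_z, ← mul_assoc, ← mul_assoc, h.z_mul_z]

lemma p_mul_c (h : IsCouplingData p q z a b c c') : p * c = c := by
  rw [← h.z_mul_a_mul_z, ← mul_assoc, ← mul_assoc, h.p_mul_z]

lemma p_mul_c' (h : IsCouplingData p q z a b c c') : p * c' = c' := by
  rw [← h.z_mul_c', ← mul_assoc, h.p_mul_z]

lemma z_mul_b_mul_c' (h : IsCouplingData p q z a b c c') : z * b * c' = z := by
  rw [← h.z_mul_c', ← mul_assoc, h.z_mul_b_mul_z, h.c_mul_c']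

lemma c'_mul_b_mul_z (h : IsCouplingData p q z a b c c') : c' * b * z = z := by
  rw [← h.c'_mul_z, mul_assoc c', mul_assoc c', h.z_mul_b_mul_z, h.c'_mul_c]

lemma p_mul_coupling (h : IsCouplingData p q z a b c c') :
    p * coupling a b c c' = a + a * c' * b - a * z := by
  have hpb : p * b = z * b := by rw [← h.p_mul_q, mul_assoc, h.q_mul_b]
  calc p * coupling a b c c'
      = p * a + p * b - p * c + (p * a - p * c) * c' * (b - c)
          + (p * b * c' - p * c * c') * (a - c) := by unfold coupling; noncomm_ring
    _ = a + z * b - c + (a * c' * b - a * (c' * c) - (c * c') * b + (c * c') * c)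
          + (z * b * c' - c * c') * (a - c) := by rw [h.p_mul_a, hpb, h.p_mul_c]; noncomm_ring
    _ = a + a * c' * b - a * z := by
          rw [h.z_mul_b_mul_c', h.c'_mul_c, h.c_mul_c', h.z_mul_c]; noncomm_ring

lemma p_mul_coupling_mul_p (h : IsCouplingData p q z a b c c') :
    p * coupling a b c c' * p = a := by
  have hbp : b * p = b * z := by rw [← h.q_mul_p, ← mul_assoc, h.b_mul_q]
  calc p * coupling a b c c' * p = a * p + a * c' * (b * p) - a * (z * p) := by
        rw [h.p_mul_coupling]; noncomm_ring
    _ = a * p + a * (c' * b * z) - a * (z * p) := by rw [hbp]; noncomm_ring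
    _ = a := by rw [h.a_mul_p, h.c'_mul_b_mul_z, h.z_mul_p, add_sub_cancel_right]

lemma mul_coupling_of_mul_eq (h : IsCouplingData p q z a b c c') {a' : R}
    (ha' : a' * a = p) (ha'p : a' * p = a') :
    a' * coupling a b c c' = p + c' * b - z :=
  calc a' * coupling a b c c' = a' * (p * coupling a b c c') := by rw [← mul_assoc, ha'p]
    _ = a' * a + a' * a * (c' * b) - a' * a * z := by rw [h.p_mul_coupling]; noncomm_ring
    _ = p + c' * b - z := by rw [ha', ← mul_assoc, h.p_mul_c', h.p_mul_z]

lemma c'_mul_coupling (h : IsCouplingData p q z a b c c') :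
    c' * coupling a b c c' = c' * a + c' * b - z :=
  calc c' * coupling a b c c' = c' * (z * (p * coupling a b c c')) := by
        rw [← mul_assoc z, h.z_mul_p, ← mul_assoc, h.c'_mul_z]
    _ = c' * z * a + c' * (z * a * c') * b - c' * (z * a * z) := by
        rw [h.p_mul_coupling]; noncomm_ring
    _ = c' * a + c' * b - z := by
        rw [h.c'_mul_z, h.symm.z_mul_b_mul_c', h.z_mul_a_mul_z, h.c'_mul_c, h.c'_mul_z]

lemma mul_coupling_eq_one (h : IsCouplingData p q z a b c c') {a' b' : R}
    (ha' : a' * a = p) (ha'p : a' * p = a') (hb' : b' * b = q) (hb'q : b' * q = b') :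
    (a' + b' - c') * coupling a b c c' = 1 := by
  have hb'E := h.symm.mul_coupling_of_mul_eq hb' hb'q
  rw [← coupling_comm] at hb'E
  calc (a' + b' - c') * coupling a b c c'
      = a' * coupling a b c c' + b' * coupling a b c c' - c' * coupling a b c c' := by
        noncomm_ring
    _ = p + q - z := by rw [h.mul_coupling_of_mul_eq ha' ha'p, hb'E, h.c'_mul_coupling]; abel
    _ = 1 := h.add_sub_eq_one

end IsCouplingData

end Coupling

section ZeroExtend

variable {ι : Type*} [DecidableEq ι]

def projOn (S : Finset ι) : Matrix ι ι ℝ :=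
  diagonal fun i => if i ∈ S then 1 else 0

lemma projOn_mul_projOn [Fintype ι] (S T : Finset ι) :
    projOn S * projOn T = projOn (S ∩ T) := by
  simp only [projOn, diagonal_mul_diagonal, Finset.mem_inter, ite_zero_mul_ite_zero, mul_one]

lemma projOn_add_projOn_sub_projOn_inter [Fintype ι] {S T : Finset ι}
    (h : S ∪ T = Finset.univ) : projOn S + projOn T - projOn (S ∩ T) = 1 := by
  rw [projOn, projOn, projOn, diagonal_add, diagonal_sub, ← diagonal_one]
  congr 1
  ext i
  have hi : i ∈ S ∨ i ∈ T := Finset.mem_union.mp (h ▸ Finset.mem_univ i)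
  by_cases hS : i ∈ S <;> by_cases hT : i ∈ T <;> simp_all

lemma projOn_mul_mul_projOn_apply [Fintype ι] {S : Finset ι} (M : Matrix ι ι ℝ) {i j : ι}
    (hi : i ∈ S) (hj : j ∈ S) : (projOn S * M * projOn S) i j = M i j := by
  simp [projOn, hi, hj]

variable {S : Finset ι}

lemma zeroExtend_apply_of_mem (M : Matrix S S ℝ) {i j : ι} (hi : i ∈ S) (hj : j ∈ S) :
    zeroExtend M i j = M ⟨i, hi⟩ ⟨j, hj⟩ := by
  simp [zeroExtend, hi, hj]

lemma zeroExtend_mul [Fintype ι] (M N : Matrix S S ℝ) :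
    zeroExtend M * zeroExtend N = zeroExtend (M * N) := by
  ext i j
  rw [mul_apply, ← Finset.sum_subset S.subset_univ (fun k _ hk => by simp [zeroExtend, hk]),
    ← Finset.sum_coe_sort S]
  by_cases hi : i ∈ S <;> by_cases hj : j ∈ S <;> simp [zeroExtend, hi, hj, mul_apply]

lemma zeroExtend_one : zeroExtend (1 : Matrix S S ℝ) = projOn S := by
  ext i j
  by_cases hi : i ∈ S <;> by_cases hj : j ∈ S <;> by_cases hij : i = j <;>
    simp_all [zeroExtend, projOn, one_apply]

lemma projOn_mul_zeroExtend [Fintype ι] (M : Matrix S S ℝ) :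
    projOn S * zeroExtend M = zeroExtend M := by
  rw [← zeroExtend_one, zeroExtend_mul, one_mul]

lemma zeroExtend_mul_projOn [Fintype ι] (M : Matrix S S ℝ) :
    zeroExtend M * projOn S = zeroExtend M := by
  rw [← zeroExtend_one, zeroExtend_mul, mul_one]

lemma zeroExtend_nonsing_inv_mul [Fintype ι] {M : Matrix S S ℝ} (hM : IsUnit M) :
    zeroExtend M⁻¹ * zeroExtend M = projOn S := by
  rw [zeroExtend_mul, nonsing_inv_mul M ((isUnit_iff_isUnit_det M).mp hM), zeroExtend_one]

lemma zeroExtend_mul_nonsing_inv [Fintype ι] {M : Matrix S S ℝ} (hM : IsUnit M) :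
    zeroExtend M * zeroExtend M⁻¹ = projOn S := by
  rw [zeroExtend_mul, mul_nonsing_inv M ((isUnit_iff_isUnit_det M).mp hM), zeroExtend_one]

lemma projOn_mul_zeroExtend_mul_projOn [Fintype ι] {T : Finset ι} (hST : S ⊆ T)
    (M : Matrix T T ℝ) (N : Matrix S S ℝ)
    (hMN : ∀ i j : S, M ⟨i, hST i.2⟩ ⟨j, hST j.2⟩ = N i j) :
    projOn S * zeroExtend M * projOn S = zeroExtend N := by
  ext i j
  by_cases hi : i ∈ S
  · by_cases hj : j ∈ S
    · rw [projOn_mul_mul_projOn_apply _ hi hj, zeroExtend_apply_of_mem _ (hST hi) (hST hj),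
        zeroExtend_apply_of_mem _ hi hj, hMN ⟨i, hi⟩ ⟨j, hj⟩]
    · simp [projOn, zeroExtend, hj]
  · simp [projOn, zeroExtend, hi]

lemma apply_eq_of_projOn_mul_mul_projOn_eq [Fintype ι] {M : Matrix ι ι ℝ}
    {N : Matrix S S ℝ}
    (h : projOn S * M * projOn S = zeroExtend N) (i j : S) : M i j = N i j := by
  rw [← projOn_mul_mul_projOn_apply M i.2 j.2, h, zeroExtend_apply_of_mem N i.2 j.2]

lemma isCouplingData_zeroExtend [Fintype ι] {X Y : Finset ι} (hXY : X ∪ Y = Finset.univ)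
    {A : Matrix X X ℝ} {B : Matrix Y Y ℝ}
    {C : Matrix (X ∩ Y : Finset ι) (X ∩ Y : Finset ι) ℝ}
    (hAC : ∀ i j : (X ∩ Y : Finset ι),
      A ⟨i, Finset.mem_of_mem_inter_left i.2⟩ ⟨j, Finset.mem_of_mem_inter_left j.2⟩ = C i j)
    (hBC : ∀ i j : (X ∩ Y : Finset ι),
      B ⟨i, Finset.mem_of_mem_inter_right i.2⟩ ⟨j, Finset.mem_of_mem_inter_right j.2⟩ = C i j)
    (hC : IsUnit C) :
    IsCouplingData (projOn X) (projOn Y) (projOn (X ∩ Y))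
      (zeroExtend A) (zeroExtend B) (zeroExtend C) (zeroExtend C⁻¹) where
  p_mul_p := by rw [projOn_mul_projOn, Finset.inter_self]
  q_mul_q := by rw [projOn_mul_projOn, Finset.inter_self]
  p_mul_q := projOn_mul_projOn X Y
  q_mul_p := by rw [projOn_mul_projOn, Finset.inter_comm]
  add_sub_eq_one := projOn_add_projOn_sub_projOn_inter hXY
  p_mul_a := projOn_mul_zeroExtend A
  a_mul_p := zeroExtend_mul_projOn A
  q_mul_b := projOn_mul_zeroExtend B
  b_mul_q := zeroExtend_mul_projOn B
  z_mul_a_mul_z := projOn_mul_zeroExtend_mul_projOn Finset.inter_subset_left A C hAC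
  z_mul_b_mul_z := projOn_mul_zeroExtend_mul_projOn Finset.inter_subset_right B C hBC
  c'_mul_c := zeroExtend_nonsing_inv_mul hC
  c_mul_c' := zeroExtend_mul_nonsing_inv hC
  z_mul_c' := projOn_mul_zeroExtend C⁻¹
  c'_mul_z := zeroExtend_mul_projOn C⁻¹

end ZeroExtend

/-- The `X×X` submatrix of the coupling `D = (Ã + B̃ - C̃)⁻¹` equals `A`, and
its `Y×Y` submatrix equals `B`. -/
theorem coupling_submatrices (X Y : Finset Q) (hQ : X ∪ Y = Finset.univ)
    (A : Matrix X X ℝ) (B : Matrix Y Y ℝ)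
    (C : Matrix (X ∩ Y : Finset Q) (X ∩ Y : Finset Q) ℝ)
    (hA : A.PosDef) (hB : B.PosDef)
    (hAC : ∀ i j : (X ∩ Y : Finset Q),
      A ⟨i, Finset.mem_of_mem_inter_left i.2⟩ ⟨j, Finset.mem_of_mem_inter_left j.2⟩ = C i j)
    (hBC : ∀ i j : (X ∩ Y : Finset Q),
      B ⟨i, Finset.mem_of_mem_inter_right i.2⟩ ⟨j, Finset.mem_of_mem_inter_right j.2⟩ = C i j)
    (D : Matrix Q Q ℝ)
    (hD : D = (zeroExtend A⁻¹ + zeroExtend B⁻¹ - zeroExtend C⁻¹)⁻¹) :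
    (∀ i j : X, D i j = A i j) ∧ (∀ i j : Y, D i j = B i j) := by
  have hC : C.PosDef := by
    let ι : (X ∩ Y : Finset Q) → X := fun i => ⟨i, Finset.mem_of_mem_inter_left i.2⟩
    have hCA : C = A.submatrix ι ι := by ext i j; exact (hAC i j).symm
    have hι : Function.Injective ι := fun i j hij => Subtype.ext (Subtype.mk.inj hij)
    rw [hCA]
    exact hA.submatrix hι
  have h := isCouplingData_zeroExtend hQ hAC hBC hC.isUnit
  have hDE : D = coupling (zeroExtend A) (zeroExtend B) (zeroExtend C) (zeroExtend C⁻¹) := by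
    rw [hD]
    exact inv_eq_right_inv <| h.mul_coupling_eq_one
      (zeroExtend_nonsing_inv_mul hA.isUnit) (zeroExtend_mul_projOn A⁻¹)
      (zeroExtend_nonsing_inv_mul hB.isUnit) (zeroExtend_mul_projOn B⁻¹)
  refine ⟨fun i j => ?_, fun i j => ?_⟩
  · rw [hDE]
    exact apply_eq_of_projOn_mul_mul_projOn_eq h.p_mul_coupling_mul_p i j
  · rw [hDE, coupling_comm]
    exact apply_eq_of_projOn_mul_mul_projOn_eq h.symm.p_mul_coupling_mul_p i j
end

section
/- With the setup of the conditional-independent coupling, det(D) = det(A) · det(B) / det(C), i.e., the determinant of D = (Ã + B̃ - C̃)^{-1} equals det(A)det(B)det(C)^{-1}. -/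
/-!
Write `W = X \ Y`, `Z = X ∩ Y`, `V = Y \ X`, so that `Q = W ⊔ Z ⊔ V`. The matrix
`Ã + B̃ - C̃` has `W`-block `P = (A⁻¹)_WW` and vanishes on `W × V`; its Schur complement
with respect to `P` is `B⁻¹`, because `C⁻¹ = (A⁻¹)_ZZ - (A⁻¹)_ZW P⁻¹ (A⁻¹)_WZ` is itself the Schur
complement of `P` in `A⁻¹`. Hence `det (Ã + B̃ - C̃) = det P · det B⁻¹`, and Jacobi's
complementary minor identity `det A · det P = det C` finishes the computation.
-/

open Matrix

variable {Q : Type*} [Fintype Q] [DecidableEq Q]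

namespace Matrix

theorem submatrix_sumElim {α ι m n : Type*} (M : Matrix ι ι α) (f : m → ι) (g : n → ι) :
    M.submatrix (Sum.elim f g) (Sum.elim f g) =
      fromBlocks (M.submatrix f f) (M.submatrix f g) (M.submatrix g f) (M.submatrix g g) := by
  ext (i | i) (j | j) <;> rfl

section Blocks

variable {m n R : Type*} [Fintype m] [Fintype n] [DecidableEq m] [DecidableEq n]
  {A P : Matrix m m R} {B U : Matrix m n R} {C V : Matrix n m R} {D S : Matrix n n R}

theorem det_fromBlocks_mul_det_of_mul_eq_one [CommRing R]
    (h : fromBlocks A B C D * fromBlocks P U V S = 1) :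
    (fromBlocks A B C D).det * S.det = A.det := by
  rw [fromBlocks_multiply, ← fromBlocks_one, fromBlocks_inj] at h
  obtain ⟨-, h₁₂, -, h₂₂⟩ := h
  have key : fromBlocks A B C D * fromBlocks 1 U 0 S = fromBlocks A 0 C 1 := by
    simp [fromBlocks_multiply, h₁₂, h₂₂]
  simpa [det_fromBlocks_zero₂₁, det_fromBlocks_zero₁₂] using congrArg det key

theorem inv_eq_sub_of_fromBlocks_mul_eq_one [Field R]
    (h : fromBlocks A B C D * fromBlocks P U V S = 1) (hS : IsUnit S.det) :
    A⁻¹ = P - U * S⁻¹ * V := by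
  rw [fromBlocks_multiply, ← fromBlocks_one, fromBlocks_inj] at h
  obtain ⟨h₁₁, h₁₂, -, -⟩ := h
  refine inv_eq_right_inv ?_
  calc A * (P - U * S⁻¹ * V) = A * P - A * U * S⁻¹ * V := by
        simp only [Matrix.mul_sub, Matrix.mul_assoc]
    _ = A * P + B * (S * S⁻¹) * V := by
        rw [eq_neg_of_add_eq_zero_left h₁₂]
        simp [Matrix.mul_assoc]
    _ = 1 := by rw [S.mul_nonsing_inv hS, Matrix.mul_one, h₁₁]

end Blocks

section Complementary

variable {ι m n K : Type*} [Fintype ι] [Fintype m] [Fintype n]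
  [DecidableEq ι] [DecidableEq m] [DecidableEq n] [Field K]

noncomputable def schurCompl (M : Matrix ι ι K) (f : m → ι) (g : n → ι) : Matrix m m K :=
  M.submatrix f f - M.submatrix f g * (M.submatrix g g)⁻¹ * M.submatrix g f

variable {M : Matrix ι ι K} {f : m → ι} {g : n → ι}

theorem det_eq_det_submatrix_mul_det_schurCompl (hfg : Function.Bijective (Sum.elim f g))
    (hg : IsUnit (M.submatrix g g).det) :
    M.det = (M.submatrix g g).det * (M.schurCompl f g).det := by
  let := invertibleOfIsUnitDet _ hg
  rw [← det_submatrix_equiv_self (Equiv.ofBijective _ hfg) M, Equiv.coe_ofBijective,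
    submatrix_sumElim, det_fromBlocks₂₂, invOf_eq_nonsing_inv, schurCompl]

theorem fromBlocks_submatrix_mul_fromBlocks_submatrix_inv (hM : IsUnit M.det)
    (hfg : Function.Bijective (Sum.elim f g)) :
    fromBlocks (M.submatrix f f) (M.submatrix f g) (M.submatrix g f) (M.submatrix g g) *
      fromBlocks (M⁻¹.submatrix f f) (M⁻¹.submatrix f g) (M⁻¹.submatrix g f)
        (M⁻¹.submatrix g g) = 1 := by
  rw [← submatrix_sumElim, ← submatrix_sumElim, ← submatrix_mul _ _ _ _ _ hfg,
    M.mul_nonsing_inv hM, submatrix_one _ hfg.injective]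

/-- Jacobi's complementary minor identity. -/
theorem det_mul_det_inv_submatrix_compl (hM : IsUnit M.det)
    (hfg : Function.Bijective (Sum.elim f g)) :
    M.det * (M⁻¹.submatrix g g).det = (M.submatrix f f).det := by
  have hdet := det_fromBlocks_mul_det_of_mul_eq_one
    (fromBlocks_submatrix_mul_fromBlocks_submatrix_inv hM hfg)
  rwa [← submatrix_sumElim, ← Equiv.coe_ofBijective _ hfg, det_submatrix_equiv_self] at hdet

theorem inv_submatrix_eq_schurCompl_inv (hM : IsUnit M.det)
    (hfg : Function.Bijective (Sum.elim f g)) (hg : IsUnit (M⁻¹.submatrix g g).det) :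
    (M.submatrix f f)⁻¹ = M⁻¹.schurCompl f g :=
  inv_eq_sub_of_fromBlocks_mul_eq_one
    (fromBlocks_submatrix_mul_fromBlocks_submatrix_inv hM hfg) hg

end Complementary

end Matrix

namespace Finset

def interToLeft {Q : Type*} [DecidableEq Q] (X Y : Finset Q) (z : (X ∩ Y : Finset Q)) : X :=
  ⟨z, mem_of_mem_inter_left z.2⟩

def complToLeft {X Y : Finset Q} (hQ : X ∪ Y = univ) (w : {q // q ∉ Y}) : X :=
  ⟨w, (mem_union.1 (hQ ▸ mem_univ w.1)).resolve_right w.2⟩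

theorem interToLeft_injective {Q : Type*} [DecidableEq Q] (X Y : Finset Q) :
    Function.Injective (interToLeft X Y) :=
  fun _ _ h => Subtype.ext (congrArg Subtype.val h :)

theorem bijective_sumElim_interToLeft_complToLeft {X Y : Finset Q} (hQ : X ∪ Y = univ) :
    Function.Bijective (Sum.elim (interToLeft X Y) (complToLeft hQ)) := by
  refine ⟨(interToLeft_injective X Y).sumElim ?_ ?_, fun x => ?_⟩
  · exact fun w w' h => Subtype.ext (congrArg Subtype.val h :)
  · exact fun z w h => w.2 (congrArg Subtype.val h ▸ (mem_inter.1 z.2).2)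
  · by_cases hx : (x : Q) ∈ Y
    · exact ⟨.inl ⟨x, mem_inter.2 ⟨x.2, hx⟩⟩, rfl⟩
    · exact ⟨.inr ⟨x, hx⟩, rfl⟩

end Finset

open Finset

section Coupling

variable {X Y : Finset Q} (hQ : X ∪ Y = univ) (A' : Matrix X X ℝ) (B' : Matrix Y Y ℝ)
  (C' : Matrix (X ∩ Y : Finset Q) (X ∩ Y : Finset Q) ℝ)

theorem submatrix_compl_zeroExtend_add_sub :
    (zeroExtend A' + zeroExtend B' - zeroExtend C').submatrix ((↑) : {q // q ∉ Y} → Q) (↑) =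
      A'.submatrix (complToLeft hQ) (complToLeft hQ) := by
  ext w w'
  have hw : (w : Q) ∈ X := (complToLeft hQ w).2
  have hw' : (w' : Q) ∈ X := (complToLeft hQ w').2
  simp [zeroExtend, complToLeft, w.2, hw, hw']

theorem schurCompl_zeroExtend_add_sub
    (hC' : C' = A'.schurCompl (interToLeft X Y) (complToLeft hQ)) :
    (zeroExtend A' + zeroExtend B' - zeroExtend C').schurCompl ((↑) : Y → Q)
      ((↑) : {q // q ∉ Y} → Q) = B' := by
  have hW : ∀ w : {q // q ∉ Y}, (w : Q) ∉ Y := fun w => w.2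
  have hWX : ∀ w : {q // q ∉ Y}, (w : Q) ∈ X := fun w => (complToLeft hQ w).2
  rw [schurCompl, submatrix_compl_zeroExtend_add_sub hQ]
  ext y y'
  by_cases hy : (y : Q) ∈ X <;> by_cases hy' : (y' : Q) ∈ X
  · have hC'yy' :=
      congrFun (congrFun hC' ⟨y, mem_inter.2 ⟨hy, y.2⟩⟩) ⟨y', mem_inter.2 ⟨hy', y'.2⟩⟩
    simp only [schurCompl, Matrix.sub_apply, submatrix_apply, interToLeft, mul_apply, complToLeft,
      zeroExtend, of_add_of, mem_inter, of_sub_of, of_apply, Pi.sub_apply, Pi.add_apply, hy,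
      ↓reduceDIte, SetLike.coe_mem, Subtype.coe_eta, and_self, hy', hWX, hW, add_zero, and_false,
      sub_zero] at hC'yy' ⊢
    rw [hC'yy']
    ring
  all_goals simp [zeroExtend, hy, hy', mul_apply, hW]

theorem det_zeroExtend_add_sub
    (hP : IsUnit (A'.submatrix (complToLeft hQ) (complToLeft hQ)).det)
    (hC' : C' = A'.schurCompl (interToLeft X Y) (complToLeft hQ)) :
    (zeroExtend A' + zeroExtend B' - zeroExtend C').det =
      (A'.submatrix (complToLeft hQ) (complToLeft hQ)).det * B'.det := by
  rw [← submatrix_compl_zeroExtend_add_sub hQ A' B' C'] at hP ⊢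
  rw [det_eq_det_submatrix_mul_det_schurCompl (Equiv.sumCompl (· ∈ Y)).bijective hP,
    schurCompl_zeroExtend_add_sub hQ A' B' C' hC']

end Coupling

theorem coupling_det_general (X Y : Finset Q) (hQ : X ∪ Y = Finset.univ)
    (A : Matrix X X ℝ) (B : Matrix Y Y ℝ)
    (C : Matrix (X ∩ Y : Finset Q) (X ∩ Y : Finset Q) ℝ)
    (hA : A.PosDef)
    (hAC : ∀ i j : (X ∩ Y : Finset Q),
      A ⟨i, Finset.mem_of_mem_inter_left i.2⟩ ⟨j, Finset.mem_of_mem_inter_left j.2⟩ = C i j) :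
    (zeroExtend A⁻¹ + zeroExtend B⁻¹ - zeroExtend C⁻¹)⁻¹.det =
      A.det * B.det / C.det := by
  have hCA : A.submatrix (interToLeft X Y) (interToLeft X Y) = C := Matrix.ext hAC
  have hAdet : IsUnit A.det := (isUnit_iff_isUnit_det A).1 hA.isUnit
  have hCdet : IsUnit C.det :=
    hCA ▸ (isUnit_iff_isUnit_det _).1 (hA.submatrix (interToLeft_injective X Y)).isUnit
  have hsplit := bijective_sumElim_interToLeft_complToLeft hQ
  have hjacobi := det_mul_det_inv_submatrix_compl hAdet hsplit
  rw [hCA] at hjacobi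
  have hPdet : IsUnit (A⁻¹.submatrix (complToLeft hQ) (complToLeft hQ)).det :=
    isUnit_of_mul_isUnit_right (hjacobi ▸ hCdet)
  have hschur := inv_submatrix_eq_schurCompl_inv hAdet hsplit hPdet
  rw [hCA] at hschur
  rw [det_nonsing_inv, det_zeroExtend_add_sub hQ _ _ _ hPdet hschur, det_nonsing_inv,
    eq_div_of_mul_eq hAdet.ne_zero ((mul_comm _ _).trans hjacobi)]
  simp only [Ring.inverse_eq_inv', mul_inv, inv_div, inv_inv]
  ring

/-- The determinant of the coupling `D = (Ã + B̃ - C̃)⁻¹` equals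
`det(A) det(B) / det(C)`. -/
theorem coupling_det (X Y : Finset Q) (hQ : X ∪ Y = Finset.univ)
    (A : Matrix X X ℝ) (B : Matrix Y Y ℝ)
    (C : Matrix (X ∩ Y : Finset Q) (X ∩ Y : Finset Q) ℝ)
    (hA : A.PosDef) (hB : B.PosDef)
    (hAC : ∀ i j : (X ∩ Y : Finset Q),
      A ⟨i, Finset.mem_of_mem_inter_left i.2⟩ ⟨j, Finset.mem_of_mem_inter_left j.2⟩ = C i j)
    (hBC : ∀ i j : (X ∩ Y : Finset Q),
      B ⟨i, Finset.mem_of_mem_inter_right i.2⟩ ⟨j, Finset.mem_of_mem_inter_right j.2⟩ = C i j) :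
    (zeroExtend A⁻¹ + zeroExtend B⁻¹ - zeroExtend C⁻¹)⁻¹.det =
      A.det * B.det / C.det :=
  coupling_det_general X Y hQ A B C hA hAC
end

section
/- Let a, b be positive integers and d₁,…,d_b positive integers with d_i ≤ a for all i and ∑_{i=1}^b d_i(d_i - 1) ≥ a(a-1). Then for all y ∈ [0,1): (1+(a-1)y)(1-y)^{a-1} ≥ ∏_{i=1}^{b} (1+(d_i-1)y)(1-y)^{d_i-1}. -/
/-- Key inequality:
`(1+ay)^{2a+1}(1-y) ≤ (1+(a+1)y)^a (1+(a-1)y)^{a+1}`. -/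
lemma keyK (y : ℝ) (hy0 : 0 ≤ y) (hy1 : y < 1) (a : ℕ) :
    (1 + (a:ℝ)*y)^(2*a+1) * (1-y) ≤
      (1 + ((a:ℝ)+1)*y)^a * (1 + ((a:ℝ)-1)*y)^(a+1) := by
  have ha0 : (0:ℝ) ≤ a := Nat.cast_nonneg a
  have hC : (0:ℝ) < 1 + (a:ℝ)*y := by nlinarith
  set C : ℝ := 1 + (a:ℝ)*y with hCdef
  set u : ℝ := y / C with hudef
  have hC1 : (1:ℝ) ≤ C := by nlinarith
  have hu0 : 0 ≤ u := div_nonneg hy0 hC.le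
  have huy : u ≤ y := div_le_self hy0 hC1
  have hu1 : u < 1 := lt_of_le_of_lt huy hy1
  have hyu : y = u * (1 + (a:ℝ)*y) := by
    rw [hudef, div_mul_cancel₀ _ hC.ne']
  have hD : 1 + ((a:ℝ)+1)*y = C*(1+u) := by
    rw [hudef]; field_simp; ring
  have hA : 1 + ((a:ℝ)-1)*y = C*(1-u) := by
    rw [hudef]; field_simp; ring
  rw [hD, hA, mul_pow, mul_pow]
  have bern : 1 - (a:ℝ)*u^2 ≤ (1-u^2)^a := by
    have h := one_add_mul_le_pow (a := -(u^2)) (by nlinarith) a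
    have e : (1:ℝ) + -(u^2) = 1 - u^2 := by ring
    rw [e] at h
    nlinarith [h]
  have hyu2 : y - u = (a:ℝ)*y*u := by linear_combination hyu
  have h3 : 1 - y ≤ (1 - (a:ℝ)*u^2)*(1-u) := by
    nlinarith [mul_nonneg (mul_nonneg ha0 hu0) (sub_nonneg.2 huy),
      mul_nonneg (mul_nonneg ha0 (mul_nonneg hu0 hu0)) hu0]
  have h2 : (1 - (a:ℝ)*u^2)*(1-u) ≤ (1-u^2)^a*(1-u) :=
    mul_le_mul_of_nonneg_right bern (by linarith)
  have hprod : 1 - y ≤ (1+u)^a * (1-u)^(a+1) := by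
    calc 1 - y ≤ (1 - (a:ℝ)*u^2)*(1-u) := h3
      _ ≤ (1-u^2)^a*(1-u) := h2
      _ = (1+u)^a * (1-u)^(a+1) := by
          rw [show (1:ℝ)-u^2 = (1+u)*(1-u) by ring, mul_pow, pow_succ]; ring
  calc C^(2*a+1) * (1-y) ≤ C^(2*a+1) * ((1+u)^a * (1-u)^(a+1)) :=
        mul_le_mul_of_nonneg_left hprod (pow_nonneg hC.le _)
    _ = C^a * (1+u)^a * (C^(a+1) * (1-u)^(a+1)) := by
        rw [show 2*a+1 = a+(a+1) by ring, pow_add]; ring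

/-- Abstract inductive step. -/
lemma keyQstep (A B C D : ℝ) (c : ℕ) (hB : 0 ≤ B) (hC : 0 < C) (hD : 0 ≤ D)
    (hK : C^(2*c+3) * B ≤ D^(c+1) * A^(c+2))
    (hQ : A^(c+2) * B^c ≤ C^c) :
    C^(c+3) * B^(c+1) ≤ D^(c+1) := by
  have h1 : C^(c+3) * B^(c+1) * C^c ≤ D^(c+1) * C^c := by
    calc C^(c+3) * B^(c+1) * C^c = (C^(2*c+3)*B)*B^c := by ring
      _ ≤ (D^(c+1)*A^(c+2))*B^c := mul_le_mul_of_nonneg_right hK (pow_nonneg hB c)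
      _ = D^(c+1)*(A^(c+2)*B^c) := by ring
      _ ≤ D^(c+1)*C^c := mul_le_mul_of_nonneg_left hQ (pow_nonneg hD _)
  exact le_of_mul_le_mul_right h1 (pow_pos hC c)

/-- `(1+(a-1)y)^{a+1}(1-y)^{a-1} ≤ (1+ay)^{a-1}` for `a ≥ 1`. -/
lemma keyQ (y : ℝ) (hy0 : 0 ≤ y) (hy1 : y < 1) :
    ∀ a : ℕ, 1 ≤ a →
      (1 + ((a:ℝ)-1)*y)^(a+1) * (1-y)^(a-1) ≤ (1 + (a:ℝ)*y)^(a-1) := by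
  intro a ha
  induction a, ha using Nat.le_induction with
  | base => norm_num
  | succ a ha IH =>
    obtain ⟨c, rfl⟩ : ∃ c, a = c + 1 := ⟨a - 1, by omega⟩
    simp only [Nat.add_sub_cancel] at IH ⊢
    push_cast at IH ⊢
    simp only [add_sub_cancel_right] at IH ⊢
    -- IH : (1+↑c*y)^(c+1+1) * (1-y)^c ≤ (1+(↑c+1)*y)^c
    -- goal : (1+(↑c+1)*y)^(c+1+1+1) * (1-y)^(c+1) ≤ (1+(↑c+1+1)*y)^(c+1)
    have hK := keyK y hy0 hy1 (c+1)
    push_cast at hK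
    simp only [add_sub_cancel_right] at hK
    rw [show 2*(c+1)+1 = 2*c+3 by omega] at hK
    have hCpos : (0:ℝ) < 1 + ((c:ℝ)+1)*y := by
      have : (0:ℝ) ≤ c := Nat.cast_nonneg c
      nlinarith
    have hDpos : (0:ℝ) ≤ 1 + ((c:ℝ)+1+1)*y := by
      have : (0:ℝ) ≤ c := Nat.cast_nonneg c
      nlinarith
    have := keyQstep (1+(c:ℝ)*y) (1-y) (1+((c:ℝ)+1)*y) (1+((c:ℝ)+1+1)*y) c
      (by linarith) hCpos hDpos (by convert hK using 2 <;> omega)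
      (by convert IH using 2 <;> omega)
    convert this using 2 <;> omega

noncomputable def auxF (y : ℝ) (n : ℕ) : ℝ := (1 + ((n : ℝ) - 1) * y) * (1 - y) ^ (n - 1)

lemma auxF_nonneg (y : ℝ) (hy0 : 0 ≤ y) (hy1 : y < 1) (n : ℕ) : 0 ≤ auxF y n := by
  unfold auxF
  apply mul_nonneg
  · have : (0:ℝ) ≤ n := Nat.cast_nonneg n
    nlinarith
  · exact pow_nonneg (by linarith) _

lemma auxF_le_one (y : ℝ) (hy0 : 0 ≤ y) (hy1 : y < 1) (a : ℕ) (ha : 1 ≤ a) :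
    auxF y a ≤ 1 := by
  unfold auxF
  have h := one_add_mul_le_pow (a := y) (by linarith) (a-1)
  rw [Nat.cast_sub ha] at h
  push_cast at h
  calc (1 + ((a:ℝ) - 1) * y) * (1 - y) ^ (a - 1)
      ≤ (1+y)^(a-1) * (1-y)^(a-1) := by
        exact mul_le_mul_of_nonneg_right h (pow_nonneg (by linarith) _)
    _ = ((1+y)*(1-y))^(a-1) := by rw [mul_pow]
    _ ≤ 1 := pow_le_one₀ (by nlinarith) (by nlinarith)

lemma keyS (y : ℝ) (hy0 : 0 ≤ y) (hy1 : y < 1) (a : ℕ) (ha : 1 ≤ a) :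
    auxF y a ^ (a+1) ≤ auxF y (a+1) ^ (a-1) := by
  obtain ⟨c, rfl⟩ : ∃ c, a = c + 1 := ⟨a - 1, by omega⟩
  unfold auxF
  simp only [Nat.add_sub_cancel]
  push_cast
  simp only [add_sub_cancel_right]
  have hQ := keyQ y hy0 hy1 (c+1) (by omega)
  simp only [Nat.add_sub_cancel] at hQ
  push_cast at hQ
  simp only [add_sub_cancel_right] at hQ
  -- hQ : (1+↑c*y)^(c+1+1) * (1-y)^c ≤ (1+(↑c+1)*y)^c
  calc ((1 + (c:ℝ)*y) * (1-y)^c)^(c+1+1)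
      = ((1 + (c:ℝ)*y)^(c+1+1) * (1-y)^c) * ((1-y)^(c+1))^c := by
        rw [mul_pow, ← pow_mul, ← pow_mul, mul_assoc, ← pow_add,
          show c*(c+1+1) = c+(c+1)*c from by ring]
    _ ≤ ((1 + ((c:ℝ)+1)*y)^c) * ((1-y)^(c+1))^c :=
        mul_le_mul_of_nonneg_right hQ (pow_nonneg (pow_nonneg (by linarith) _) _)
    _ = ((1 + ((c:ℝ)+1)*y) * (1-y)^(c+1))^c := by rw [mul_pow]

lemma keyL (y : ℝ) (hy0 : 0 ≤ y) (hy1 : y < 1) (d a : ℕ) (hd : 1 ≤ d) (hda : d ≤ a) :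
    auxF y d ^ (a*(a-1)) ≤ auxF y a ^ (d*(d-1)) := by
  induction a, hda using Nat.le_induction with
  | base => exact le_refl _
  | succ a hda IH =>
    by_cases hd2 : d = 1
    · subst hd2
      simp [auxF]
    · have hd2' : 2 ≤ d := by omega
      have ha2 : 2 ≤ a := le_trans hd2' hda
      obtain ⟨e, rfl⟩ : ∃ e, a = e + 2 := ⟨a - 2, by omega⟩
      have hS := keyS y hy0 hy1 (e+2) (by omega)
      have hFd := auxF_nonneg y hy0 hy1 d
      have hFa := auxF_nonneg y hy0 hy1 (e+2)
      have hFa1 := auxF_nonneg y hy0 hy1 (e+3)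
      simp only [show e+2-1 = e+1 from rfl, show e+2+1-1 = e+2 from rfl,
        show e+2+1 = e+3 from rfl] at *
      have key : (auxF y d ^ ((e+3)*(e+2)))^(e+1) ≤ (auxF y (e+3) ^ (d*(d-1)))^(e+1) := by
        calc (auxF y d ^ ((e+3)*(e+2)))^(e+1)
            = (auxF y d ^ ((e+2)*(e+1)))^(e+3) := by
              rw [← pow_mul, ← pow_mul]; ring_nf
          _ ≤ (auxF y (e+2) ^ (d*(d-1)))^(e+3) := pow_le_pow_left₀ (pow_nonneg hFd _) IH _
          _ = (auxF y (e+2) ^ (e+3))^(d*(d-1)) := by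
              rw [← pow_mul, ← pow_mul, Nat.mul_comm]
          _ ≤ (auxF y (e+3) ^ (e+1))^(d*(d-1)) := pow_le_pow_left₀ (pow_nonneg hFa _) hS _
          _ = (auxF y (e+3) ^ (d*(d-1)))^(e+1) := by
              rw [← pow_mul, ← pow_mul, Nat.mul_comm]
      exact (pow_le_pow_iff_left₀ (pow_nonneg hFd _) (pow_nonneg hFa1 _) (by omega)).mp key

/-- If `d_i ≤ a` and `∑ d_i(d_i-1) ≥ a(a-1)`, then for `y ∈ [0,1)`:
`(1+(a-1)y)(1-y)^{a-1} ≥ ∏ (1+(d_i-1)y)(1-y)^{d_i-1}`. -/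
theorem product_inequality (a b : ℕ) (ha : 1 ≤ a) (hb : 1 ≤ b)
    (d : Fin b → ℕ) (hd1 : ∀ i, 1 ≤ d i) (hda : ∀ i, d i ≤ a)
    (hsum : (a * (a - 1) : ℕ) ≤ ∑ i, d i * (d i - 1))
    (y : ℝ) (hy : y ∈ Set.Ico (0 : ℝ) 1) :
    ∏ i, (1 + ((d i : ℝ) - 1) * y) * (1 - y) ^ (d i - 1) ≤
      (1 + ((a : ℝ) - 1) * y) * (1 - y) ^ (a - 1) := by
  obtain ⟨hy0, hy1⟩ := hy
  by_cases hA : a = 1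
  · subst hA
    have hdi : ∀ i, d i = 1 := fun i => le_antisymm (hda i) (hd1 i)
    simp [hdi]
  · have ha2 : 2 ≤ a := by omega
    show ∏ i, auxF y (d i) ≤ auxF y a
    have hN : a*(a-1) ≠ 0 := by
      have : 1 ≤ a - 1 := by omega
      positivity
    have hFnn := auxF_nonneg y hy0 hy1
    have h1 : (∏ i, auxF y (d i))^(a*(a-1)) = ∏ i, (auxF y (d i))^(a*(a-1)) :=
      (Finset.prod_pow _ _ _).symm
    have h2 : ∏ i, (auxF y (d i))^(a*(a-1)) ≤ ∏ i, (auxF y a)^(d i*(d i-1)) :=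
      Finset.prod_le_prod (fun i _ => pow_nonneg (hFnn _) _)
        (fun i _ => keyL y hy0 hy1 (d i) a (hd1 i) (hda i))
    have h3 : ∏ i, (auxF y a)^(d i*(d i-1)) = (auxF y a)^(∑ i, d i*(d i-1)) :=
      Finset.prod_pow_eq_pow_sum _ _ _
    have h4 : (auxF y a)^(∑ i, d i*(d i-1)) ≤ (auxF y a)^(a*(a-1)) :=
      pow_le_pow_of_le_one (hFnn a) (auxF_le_one y hy0 hy1 a ha) hsum
    refine (pow_le_pow_iff_left₀ (Finset.prod_nonneg fun i _ => hFnn _) (hFnn a) hN).mp ?_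
    rw [h1]
    exact le_trans (le_trans h2 (le_of_eq h3)) h4
end

section
/- Let a, d₁,…,d_b be positive integers with d_i ≤ a for all i and ∑_{i=1}^b d_i(d_i-1) ≥ a(a-1). Then for every y ∈ (0,1): a(a-1)/(1+(a-1)y) ≤ ∑_{i=1}^{b} d_i(d_i-1)/(1+(d_i-1)y). -/
/-- If `d_i ≤ a` and `∑ d_i(d_i-1) ≥ a(a-1)`, then for `y ∈ (0,1)`:
`a(a-1)/(1+(a-1)y) ≤ ∑ d_i(d_i-1)/(1+(d_i-1)y)`. -/
theorem fraction_sum_inequality (a b : ℕ) (ha : 1 ≤ a) (hb : 1 ≤ b)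
    (d : Fin b → ℕ) (hd1 : ∀ i, 1 ≤ d i) (hda : ∀ i, d i ≤ a)
    (hsum : (a * (a - 1) : ℕ) ≤ ∑ i, d i * (d i - 1))
    (y : ℝ) (hy : y ∈ Set.Ioo (0 : ℝ) 1) :
    (a : ℝ) * ((a : ℝ) - 1) / (1 + ((a : ℝ) - 1) * y) ≤
      ∑ i, (d i : ℝ) * ((d i : ℝ) - 1) / (1 + ((d i : ℝ) - 1) * y) := by
  obtain ⟨hy0, hy1⟩ := hy
  have ha1 : (1 : ℝ) ≤ (a : ℝ) := by exact_mod_cast ha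
  have hden : 0 < 1 + ((a : ℝ) - 1) * y := by nlinarith
  have hcast : ∀ i, (d i : ℝ) * ((d i : ℝ) - 1) = ((d i * (d i - 1) : ℕ) : ℝ) := by
    intro i
    have := hd1 i
    push_cast [Nat.cast_sub this]
    ring
  have hsum' : (a : ℝ) * ((a : ℝ) - 1) ≤ ∑ i, (d i : ℝ) * ((d i : ℝ) - 1) := by
    have : (a : ℝ) * ((a : ℝ) - 1) = ((a * (a - 1) : ℕ) : ℝ) := by
      push_cast [Nat.cast_sub ha]; ring
    rw [this]
    simp only [hcast]
    rw [← Nat.cast_sum]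
    exact_mod_cast hsum
  calc (a : ℝ) * ((a : ℝ) - 1) / (1 + ((a : ℝ) - 1) * y)
      ≤ (∑ i, (d i : ℝ) * ((d i : ℝ) - 1)) / (1 + ((a : ℝ) - 1) * y) := by
        gcongr
    _ ≤ ∑ i, (d i : ℝ) * ((d i : ℝ) - 1) / (1 + ((d i : ℝ) - 1) * y) := by
        rw [Finset.sum_div]
        apply Finset.sum_le_sum
        intro i _
        have hdi1 : (1 : ℝ) ≤ (d i : ℝ) := by exact_mod_cast hd1 i
        have hdia : (d i : ℝ) ≤ (a : ℝ) := by exact_mod_cast hda i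
        have hdeni : 0 < 1 + ((d i : ℝ) - 1) * y := by nlinarith
        have hnum : 0 ≤ (d i : ℝ) * ((d i : ℝ) - 1) := by nlinarith
        gcongr
end
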